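/- (Thermodynamic bound on the evolution of an environmental observable.) Let G_E ∈ M_M(ℂ) be Hermitian with G_E f_0 = g_0 f_0 for some real g_0, let G = I_n ⊗ I_n ⊗ G_E, and let g_max ≥ 0 satisfy ‖G_E x‖ ≤ g_max ‖x‖ for all x ∈ ℂ^M. Then |⟨G⟩ − g_0| ≤ √(g_max² · Ξ), i.e. (⟨G⟩ − g_0)² ≤ g_max² · Ξ, where ⟨G⟩ is the expectation of G in the final pure state Ψ_T and Ξ is the survival activity. -/

import Mathlib

open Matrix Kronecker Finset

noncomputable section

/-- Tensor product of two vectors. -/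
def tvec {α β : Type*} (x : α → ℂ) (y : β → ℂ) : α × β → ℂ :=
  fun q => x q.1 * y q.2

/-- Standard basis vector `f_m` of the environment `ℂ^(M+1)`. -/
def stdv (M : ℕ) (m : Fin (M + 1)) : Fin (M + 1) → ℂ :=
  fun k => if k = m then 1 else 0

variable {n M : ℕ}

/-- The final pure state `Ψ_T = ∑_{i,m} √p_i ψ_i ⊗ (V_m ψ_i) ⊗ f_m` of R+S+E. -/
def PsiT (ψ : Fin n → Fin n → ℂ) (p : Fin n → ℝ)
    (V : Fin (M + 1) → Matrix (Fin n) (Fin n) ℂ) :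
    (Fin n × Fin n) × Fin (M + 1) → ℂ :=
  ∑ i, ∑ m, ((Real.sqrt (p i) : ℂ) • tvec (tvec (ψ i) (V m *ᵥ ψ i)) (stdv M m))

/-- The unnormalized vector `Ψ̃_0 = ∑_i √p_i ψ_i ⊗ ((V_0†)⁻¹ ψ_i) ⊗ f_0`. -/
def PsiTilde0 (ψ : Fin n → Fin n → ℂ) (p : Fin n → ℝ)
    (V : Fin (M + 1) → Matrix (Fin n) (Fin n) ℂ) :
    (Fin n × Fin n) × Fin (M + 1) → ℂ :=
  ∑ i, ((Real.sqrt (p i) : ℂ) • tvec (tvec (ψ i) ((((V 0)ᴴ)⁻¹) *ᵥ ψ i)) (stdv M 0))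

/-- The initial density matrix `ρ = ∑_i p_i ψ_i ψ_i†` of the principal system S. -/
def rho (ψ : Fin n → Fin n → ℂ) (p : Fin n → ℝ) : Matrix (Fin n) (Fin n) ℂ :=
  ∑ i, ((p i : ℂ) • vecMulVec (ψ i) (star (ψ i)))

/-- Expectation value `⟨G⟩ = ⟨Ψ, G Ψ⟩` (its real part, which is all of it for Hermitian `G`). -/
def expval {ι : Type*} [Fintype ι] (G : Matrix ι ι ℂ) (Ψ : ι → ℂ) : ℝ :=
  (star Ψ ⬝ᵥ (G *ᵥ Ψ)).re

/-- Variance `Var[G] = ⟨Ψ, G² Ψ⟩ − ⟨G⟩²`. -/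
def variance {ι : Type*} [Fintype ι] (G : Matrix ι ι ℂ) (Ψ : ι → ℂ) : ℝ :=
  expval (G * G) Ψ - (expval G Ψ) ^ 2

/-- The survival activity `Ξ = Tr[ρ (V_0† V_0)⁻¹] − 1`. -/
def survivalActivity (ψ : Fin n → Fin n → ℂ) (p : Fin n → ℝ)
    (V : Fin (M + 1) → Matrix (Fin n) (Fin n) ℂ) : ℝ :=
  ((rho ψ p * ((V 0)ᴴ * V 0)⁻¹).trace).re - 1

/-! Write `Ψ = Ψ_T` and `Φ = Ψ̃₀ = ∑ᵢ √pᵢ ψᵢ ⊗ (V₀†)⁻¹ψᵢ ⊗ f₀`. Both are dilated states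
`∑ cᵢ ψᵢ ⊗ X_m ψᵢ ⊗ f_m`, whose overlaps are the traces `Tr[ρ ∑ X_m† Y_m]`; hence
`⟨Ψ, Ψ⟩ = ⟨Φ, Ψ⟩ = 1` and `⟨Φ, Φ⟩ = Tr[ρ (V₀†V₀)⁻¹] = Ξ + 1`, so `‖Ψ - Φ‖² = Ξ`.
As `G` is Hermitian with `GΦ = g₀Φ`, `⟨G⟩ - g₀ = ⟨Ψ - Φ, GΨ⟩`, and Cauchy–Schwarz gives
`(⟨G⟩ - g₀)² ≤ ‖Ψ - Φ‖² ‖GΨ‖² ≤ Ξ g_max²`. -/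

section InnerProductSpace

variable {𝕜 E : Type*} [RCLike 𝕜] [NormedAddCommGroup E] [InnerProductSpace 𝕜 E]

open RCLike in
theorem LinearMap.IsSymmetric.sq_re_inner_sub_le {T : E →ₗ[𝕜] E} (hT : T.IsSymmetric)
    {φ ψ : E} {g C : ℝ} (hφ : T φ = (g : 𝕜) • φ) (hφψ : inner 𝕜 φ ψ = 1) (hψ : ‖ψ‖ = 1)
    (hTψ : ‖T ψ‖ ^ 2 ≤ C) :
    (re (inner 𝕜 ψ (T ψ)) - g) ^ 2 ≤ C * (‖φ‖ ^ 2 - 1) := by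
  have hφTψ : inner 𝕜 φ (T ψ) = g := by
    rw [← hT, hφ, inner_smul_left, conj_ofReal, hφψ, mul_one]
  have hdist : ‖ψ - φ‖ ^ 2 = ‖φ‖ ^ 2 - 1 := by
    rw [@norm_sub_sq 𝕜, hψ, ← inner_conj_symm, hφψ]
    simp only [map_one, one_re]
    ring
  calc (re (inner 𝕜 ψ (T ψ)) - g) ^ 2 = re (inner 𝕜 (ψ - φ) (T ψ)) ^ 2 := by
        rw [inner_sub_left, hφTψ, map_sub, ofReal_re]
    _ ≤ ‖inner 𝕜 (ψ - φ) (T ψ)‖ ^ 2 := sq_le_sq' (abs_le.mp (abs_re_le_norm _)).1 (re_le_norm _)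
    _ ≤ (‖ψ - φ‖ * ‖T ψ‖) ^ 2 := pow_le_pow_left₀ (norm_nonneg _) (norm_inner_le_norm _ _) 2
    _ ≤ C * (‖φ‖ ^ 2 - 1) := by
        rw [mul_pow, ← hdist, mul_comm C]
        exact mul_le_mul_of_nonneg_left hTψ (sq_nonneg _)

end InnerProductSpace

section EuclideanSpace

open WithLp

variable {𝕜 ι : Type*} [RCLike 𝕜] [Fintype ι]

theorem norm_toLp_sq (v : ι → 𝕜) : ‖toLp 2 v‖ ^ 2 = RCLike.re (star v ⬝ᵥ v) := by
  rw [@norm_sq_eq_re_inner 𝕜, EuclideanSpace.inner_toLp_toLp, dotProduct_comm]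

theorem Matrix.IsHermitian.sq_expval_sub_le [DecidableEq ι] {G : Matrix ι ι ℂ}
    (hG : G.IsHermitian)
    {Φ Ψ : ι → ℂ} {g C : ℝ} (hGΦ : G *ᵥ Φ = (g : ℂ) • Φ) (hΦΨ : star Φ ⬝ᵥ Ψ = 1)
    (hΨ : star Ψ ⬝ᵥ Ψ = 1) (hGΨ : ‖toLp 2 (G *ᵥ Ψ)‖ ^ 2 ≤ C) :
    (expval G Ψ - g) ^ 2 ≤ C * ((star Φ ⬝ᵥ Φ).re - 1) := by
  have hT := Matrix.isSymmetric_toEuclideanLin_iff.mpr hG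
  have hnorm : ‖toLp 2 Ψ‖ = 1 := by
    rw [← pow_eq_one_iff_of_nonneg (norm_nonneg _) two_ne_zero, norm_toLp_sq, hΨ, RCLike.one_re]
  have key := hT.sq_re_inner_sub_le (φ := toLp 2 Φ) (ψ := toLp 2 Ψ) (g := g)
    (by rw [toEuclideanLin, toLpLin_toLp, toLin'_apply, hGΦ]; rfl)
    (by rw [EuclideanSpace.inner_toLp_toLp, dotProduct_comm, hΦΨ]) hnorm hGΨ
  rwa [toEuclideanLin, toLpLin_toLp, toLin'_apply, EuclideanSpace.inner_toLp_toLp,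
    dotProduct_comm, norm_toLp_sq] at key

end EuclideanSpace

section Kronecker

open WithLp

variable {𝕜 α β : Type*} [RCLike 𝕜] [DecidableEq α]

theorem Matrix.IsHermitian.one_kronecker {B : Matrix β β 𝕜} (hB : B.IsHermitian) :
    ((1 : Matrix α α 𝕜) ⊗ₖ B).IsHermitian := by
  rw [IsHermitian, conjTranspose_kronecker, conjTranspose_one, hB.eq]

variable [Fintype α] [Fintype β]

theorem one_kronecker_mulVec_apply (B : Matrix β β 𝕜) (v : α × β → 𝕜) (a : α) (b : β) :
    (((1 : Matrix α α 𝕜) ⊗ₖ B) *ᵥ v) (a, b) = (B *ᵥ fun b' => v (a, b')) b := by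
  simp only [mulVec, dotProduct, kroneckerMap_apply, Fintype.sum_prod_type, one_apply, ite_mul,
    one_mul, zero_mul, Finset.sum_ite_irrel, Finset.sum_const_zero, Finset.sum_ite_eq,
    Finset.mem_univ, if_true]

theorem norm_toLp_one_kronecker_mulVec_sq_le {B : Matrix β β 𝕜} {c : ℝ}
    (hB : ∀ x, ‖toLp 2 (B *ᵥ x)‖ ≤ c * ‖toLp 2 x‖) (v : α × β → 𝕜) :
    ‖toLp 2 (((1 : Matrix α α 𝕜) ⊗ₖ B) *ᵥ v)‖ ^ 2 ≤ c ^ 2 * ‖toLp 2 v‖ ^ 2 := by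
  have hB2 (x : β → 𝕜) : ‖toLp 2 (B *ᵥ x)‖ ^ 2 ≤ c ^ 2 * ‖toLp 2 x‖ ^ 2 := by
    rw [← mul_pow]; exact pow_le_pow_left₀ (norm_nonneg _) (hB x) 2
  simp only [EuclideanSpace.norm_sq_eq] at hB2 ⊢
  rw [Fintype.sum_prod_type, Fintype.sum_prod_type, Finset.mul_sum]
  simp only [one_kronecker_mulVec_apply]
  exact Finset.sum_le_sum fun a _ => hB2 _

end Kronecker

section TensorVectors

variable {α β : Type*}

theorem star_tvec (x : α → ℂ) (y : β → ℂ) : star (tvec x y) = tvec (star x) (star y) := by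
  ext q; simp [tvec]

@[simp]
theorem tvec_zero_left (y : β → ℂ) : tvec (0 : α → ℂ) y = 0 := by
  ext q; simp [tvec]

@[simp]
theorem tvec_zero_right (x : α → ℂ) : tvec x (0 : β → ℂ) = 0 := by
  ext q; simp [tvec]

theorem tvec_smul_right (x : α → ℂ) (c : ℂ) (y : β → ℂ) : tvec x (c • y) = c • tvec x y := by
  ext q; simp only [tvec, Pi.smul_apply, smul_eq_mul]; ring

variable [Fintype α] [Fintype β]

theorem tvec_dotProduct_tvec (x x' : α → ℂ) (y y' : β → ℂ) :
    tvec x y ⬝ᵥ tvec x' y' = (x ⬝ᵥ x') * (y ⬝ᵥ y') := by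
  simp only [dotProduct, tvec, Fintype.sum_prod_type, Finset.sum_mul_sum]
  exact Finset.sum_congr rfl fun _ _ => Finset.sum_congr rfl fun _ _ => by ring

theorem kronecker_mulVec_tvec [DecidableEq α] [DecidableEq β] (A : Matrix α α ℂ)
    (B : Matrix β β ℂ) (x : α → ℂ) (y : β → ℂ) :
    (A ⊗ₖ B) *ᵥ tvec x y = tvec (A *ᵥ x) (B *ᵥ y) := by
  ext ⟨a, b⟩
  simp only [mulVec, dotProduct, tvec, kroneckerMap_apply, Fintype.sum_prod_type,
    Finset.sum_mul_sum]
  exact Finset.sum_congr rfl fun _ _ => Finset.sum_congr rfl fun _ _ => by ring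

end TensorVectors

section Dilation

variable {ι σ : Type*} [Fintype ι] [DecidableEq ι] [Fintype σ]

def dilatedState (ψ : ι → σ → ℂ) (c : ι → ℂ) (X : Fin (M + 1) → Matrix σ σ ℂ) :
    (σ × σ) × Fin (M + 1) → ℂ :=
  ∑ i, ∑ m, c i • tvec (tvec (ψ i) (X m *ᵥ ψ i)) (stdv M m)

theorem star_stdv_dotProduct_stdv (m m' : Fin (M + 1)) :
    star (stdv M m) ⬝ᵥ stdv M m' = if m = m' then 1 else 0 := by
  simp [stdv, dotProduct, apply_ite, eq_comm]

theorem star_dilatedState_dotProduct (ψ : ι → σ → ℂ)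
    (hψ : ∀ i j, star (ψ i) ⬝ᵥ ψ j = if i = j then 1 else 0)
    (c d : ι → ℂ) (X Y : Fin (M + 1) → Matrix σ σ ℂ) :
    star (dilatedState ψ c X) ⬝ᵥ dilatedState ψ d Y
      = ∑ i, star (c i) * d i * (star (ψ i) ⬝ᵥ ((∑ m, (X m)ᴴ * Y m) *ᵥ ψ i)) := by
  have hterm (i j m m') : star (tvec (tvec (ψ i) (X m *ᵥ ψ i)) (stdv M m))
      ⬝ᵥ tvec (tvec (ψ j) (Y m' *ᵥ ψ j)) (stdv M m')
      = if i = j ∧ m = m' then star (ψ i) ⬝ᵥ (((X m)ᴴ * Y m) *ᵥ ψ i) else 0 := by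
    rw [star_tvec, star_tvec, tvec_dotProduct_tvec, tvec_dotProduct_tvec, hψ,
      star_stdv_dotProduct_stdv, star_mulVec, ← dotProduct_mulVec, mulVec_mulVec]
    by_cases hij : i = j <;> by_cases hm : m = m' <;> simp [hij, hm]
  simp only [dilatedState, star_sum, star_smul, sum_dotProduct, dotProduct_sum, smul_dotProduct,
    dotProduct_smul, smul_eq_mul, hterm, sum_mulVec, Finset.mul_sum, ite_and, mul_ite, mul_zero,
    Finset.sum_ite_irrel, Finset.sum_const_zero, Finset.sum_ite_eq',
    Finset.mem_univ, if_true]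
  exact Finset.sum_congr rfl fun _ _ => Finset.sum_congr rfl fun _ _ => by ring

theorem sum_conjTranspose_single_mul (W : Matrix σ σ ℂ)
    (Y : Fin (M + 1) → Matrix σ σ ℂ) :
    ∑ m, ((Pi.single 0 W : Fin (M + 1) → Matrix σ σ ℂ) m)ᴴ * Y m = Wᴴ * Y 0 :=
  Fintype.sum_eq_single 0 fun m hm => by simp [hm]

end Dilation

theorem trace_rho_mul (ψ : Fin n → Fin n → ℂ) (p : Fin n → ℝ) (B : Matrix (Fin n) (Fin n) ℂ) :
    (rho ψ p * B).trace = ∑ i, (p i : ℂ) * (star (ψ i) ⬝ᵥ (B *ᵥ ψ i)) := by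
  simp only [rho, Finset.sum_mul, trace_sum, smul_mul_assoc, trace_smul, vecMulVec_mul,
    trace_vecMulVec, smul_eq_mul, dotProduct_comm (ψ _), dotProduct_mulVec]

theorem trace_rho {ψ : Fin n → Fin n → ℂ}
    (hψ : ∀ i j, star (ψ i) ⬝ᵥ ψ j = if i = j then 1 else 0) {p : Fin n → ℝ}
    (hp1 : ∑ i, p i = 1) : (rho ψ p).trace = 1 := by
  rw [← Matrix.mul_one (rho ψ p), trace_rho_mul]
  simp only [one_mulVec, hψ, if_true, mul_one]
  exact_mod_cast hp1

theorem star_dilatedState_sqrt_dotProduct {ψ : Fin n → Fin n → ℂ}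
    (hψ : ∀ i j, star (ψ i) ⬝ᵥ ψ j = if i = j then 1 else 0) {p : Fin n → ℝ}
    (hp : ∀ i, 0 ≤ p i) (X Y : Fin (M + 1) → Matrix (Fin n) (Fin n) ℂ) :
    star (dilatedState ψ (fun i => (Real.sqrt (p i) : ℂ)) X)
        ⬝ᵥ dilatedState ψ (fun i => (Real.sqrt (p i) : ℂ)) Y
      = (rho ψ p * ∑ m, (X m)ᴴ * Y m).trace := by
  rw [star_dilatedState_dotProduct ψ hψ, trace_rho_mul]
  refine Finset.sum_congr rfl fun i _ => ?_
  rw [Complex.star_def, Complex.conj_ofReal, ← Complex.ofReal_mul, Real.mul_self_sqrt (hp i)]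

theorem PsiT_eq_dilatedState (ψ : Fin n → Fin n → ℂ) (p : Fin n → ℝ)
    (V : Fin (M + 1) → Matrix (Fin n) (Fin n) ℂ) :
    PsiT ψ p V = dilatedState ψ (fun i => (Real.sqrt (p i) : ℂ)) V :=
  rfl

theorem PsiTilde0_eq_dilatedState (ψ : Fin n → Fin n → ℂ) (p : Fin n → ℝ)
    (V : Fin (M + 1) → Matrix (Fin n) (Fin n) ℂ) :
    PsiTilde0 ψ p V
      = dilatedState ψ (fun i => (Real.sqrt (p i) : ℂ)) (Pi.single 0 (V 0)ᴴ⁻¹) := by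
  refine Finset.sum_congr rfl fun i _ => ?_
  rw [Fintype.sum_eq_single 0 fun m hm => by simp [hm], Pi.single_eq_same]

theorem one_kronecker_mulVec_PsiTilde0 (ψ : Fin n → Fin n → ℂ) (p : Fin n → ℝ)
    (V : Fin (M + 1) → Matrix (Fin n) (Fin n) ℂ) {GE : Matrix (Fin (M + 1)) (Fin (M + 1)) ℂ}
    {g : ℝ} (hg : GE *ᵥ stdv M 0 = (g : ℂ) • stdv M 0) :
    (1 ⊗ₖ GE) *ᵥ PsiTilde0 ψ p V = (g : ℂ) • PsiTilde0 ψ p V := by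
  simp only [PsiTilde0, mulVec_sum, Finset.smul_sum, mulVec_smul, kronecker_mulVec_tvec,
    one_mulVec, hg, tvec_smul_right, smul_comm (g : ℂ)]

theorem env_observable_evolution_bound_general
    (ψ : Fin n → Fin n → ℂ)
    (hortho : ∀ i j, star (ψ i) ⬝ᵥ ψ j = if i = j then (1 : ℂ) else 0)
    (p : Fin n → ℝ) (hp : ∀ i, 0 ≤ p i) (hp1 : ∑ i, p i = 1)
    (V : Fin (M + 1) → Matrix (Fin n) (Fin n) ℂ)
    (hKraus : ∑ m, (V m)ᴴ * V m = 1)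
    (hV0 : IsUnit (V 0))
    (GE : Matrix (Fin (M + 1)) (Fin (M + 1)) ℂ) (hGE : GE.IsHermitian)
    (g0 : ℝ) (hg0 : GE *ᵥ stdv M 0 = (g0 : ℂ) • stdv M 0)
    (gmax : ℝ)
    (hgmax : ∀ x : Fin (M + 1) → ℂ,
      Real.sqrt (∑ k, ‖(GE *ᵥ x) k‖ ^ 2)
        ≤ gmax * Real.sqrt (∑ k, ‖x k‖ ^ 2)) :
    (expval (((1 : Matrix (Fin n) (Fin n) ℂ) ⊗ₖ (1 : Matrix (Fin n) (Fin n) ℂ)) ⊗ₖ GE)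
        (PsiT ψ p V) - g0) ^ 2
      ≤ gmax ^ 2 * survivalActivity ψ p V := by
  have hdet : IsUnit (V 0).det := (isUnit_iff_isUnit_det _).mp hV0
  have hΨΨ : star (PsiT ψ p V) ⬝ᵥ PsiT ψ p V = 1 := by
    rw [PsiT_eq_dilatedState, star_dilatedState_sqrt_dotProduct hortho hp, hKraus,
      Matrix.mul_one, trace_rho hortho hp1]
  have hΦΨ : star (PsiTilde0 ψ p V) ⬝ᵥ PsiT ψ p V = 1 := by
    rw [PsiTilde0_eq_dilatedState, PsiT_eq_dilatedState,
      star_dilatedState_sqrt_dotProduct hortho hp, sum_conjTranspose_single_mul,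
      conjTranspose_nonsing_inv, conjTranspose_conjTranspose, nonsing_inv_mul _ hdet,
      Matrix.mul_one, trace_rho hortho hp1]
  have hΦΦ :
      star (PsiTilde0 ψ p V) ⬝ᵥ PsiTilde0 ψ p V = (rho ψ p * ((V 0)ᴴ * V 0)⁻¹).trace := by
    rw [PsiTilde0_eq_dilatedState, star_dilatedState_sqrt_dotProduct hortho hp,
      sum_conjTranspose_single_mul, Pi.single_eq_same, conjTranspose_nonsing_inv,
      conjTranspose_conjTranspose, Matrix.mul_inv_rev]
  have hGΨ : ‖WithLp.toLp 2
      (((1 : Matrix (Fin n × Fin n) (Fin n × Fin n) ℂ) ⊗ₖ GE) *ᵥ PsiT ψ p V)‖ ^ 2 ≤ gmax ^ 2 := by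
    have h := norm_toLp_one_kronecker_mulVec_sq_le (α := Fin n × Fin n) (c := gmax)
      (fun x => by simpa only [EuclideanSpace.norm_eq] using hgmax x) (PsiT ψ p V)
    rwa [norm_toLp_sq (PsiT ψ p V), hΨΨ, RCLike.one_re, mul_one] at h
  rw [one_kronecker_one]
  calc _ ≤ gmax ^ 2 * ((star (PsiTilde0 ψ p V) ⬝ᵥ PsiTilde0 ψ p V).re - 1) :=
        hGE.one_kronecker.sq_expval_sub_le (one_kronecker_mulVec_PsiTilde0 ψ p V hg0) hΦΨ hΨΨ hGΨ
    _ = gmax ^ 2 * survivalActivity ψ p V := by rw [hΦΦ, survivalActivity]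

/-- **Thermodynamic bound on the evolution of an environmental observable.** -/
theorem env_observable_evolution_bound
    (ψ : Fin n → Fin n → ℂ)
    (hortho : ∀ i j, star (ψ i) ⬝ᵥ ψ j = if i = j then (1 : ℂ) else 0)
    (p : Fin n → ℝ) (hp : ∀ i, 0 ≤ p i) (hp1 : ∑ i, p i = 1)
    (V : Fin (M + 1) → Matrix (Fin n) (Fin n) ℂ)
    (hKraus : ∑ m, (V m)ᴴ * V m = 1)
    (hV0 : IsUnit (V 0))
    (GE : Matrix (Fin (M + 1)) (Fin (M + 1)) ℂ) (hGE : GE.IsHermitian)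
    (g0 : ℝ) (hg0 : GE *ᵥ stdv M 0 = (g0 : ℂ) • stdv M 0)
    (gmax : ℝ) (hgmax0 : 0 ≤ gmax)
    (hgmax : ∀ x : Fin (M + 1) → ℂ,
      Real.sqrt (∑ k, ‖(GE *ᵥ x) k‖ ^ 2)
        ≤ gmax * Real.sqrt (∑ k, ‖x k‖ ^ 2)) :
    (expval (((1 : Matrix (Fin n) (Fin n) ℂ) ⊗ₖ (1 : Matrix (Fin n) (Fin n) ℂ)) ⊗ₖ GE)
        (PsiT ψ p V) - g0) ^ 2
      ≤ gmax ^ 2 * survivalActivity ψ p V :=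
  env_observable_evolution_bound_general ψ hortho p hp hp1 V hKraus hV0 GE hGE g0 hg0 gmax hgmax
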